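/- Truncated normal mean upper bound: for every c ≥ 0, the truncated standard normal mean below -c satisfies E[z | z < -c] + c ≤ -e^{-3/2} · min{1, 1/c}, where min{1, 1/c} is interpreted as 1 when c = 0; that is, (∫_{-∞}^{-c} (z + c) φ(z) dz) / Φ(-c) ≤ -e^{-3/2} · min{1, 1/c}. -/

import Mathlib

open MeasureTheory ProbabilityTheory Set

noncomputable section

/-- Standard normal density. -/
def stdPdf (z : ℝ) : ℝ := Real.exp (-z ^ 2 / 2) / Real.sqrt (2 * Real.pi)

/-- Standard normal cdf. -/
def stdCdf (c : ℝ) : ℝ := ∫ z in Set.Iio c, stdPdf z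

/-- Mean of a standard normal truncated to `(c, ∞)`. -/
def truncMeanAbove (c : ℝ) : ℝ :=
  (∫ z in Set.Ioi c, z * stdPdf z) / (∫ z in Set.Ioi c, stdPdf z)

/-- Mean of a standard normal truncated to `(-∞, c)`. -/
def truncMeanBelow (c : ℝ) : ℝ :=
  (∫ z in Set.Iio c, z * stdPdf z) / (∫ z in Set.Iio c, stdPdf z)

/-- Mean of a standard normal truncated to `(a, b)`. -/
def truncMeanBetween (a b : ℝ) : ℝ :=
  (∫ z in Set.Ioo a b, z * stdPdf z) / (∫ z in Set.Ioo a b, stdPdf z)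

/-- Signum, with the (measure-zero) value at `0` set to `-1`. -/
def sgn (x : ℝ) : ℝ := if 0 < x then 1 else -1

/-- The standard normal measure on `ℝ`. -/
def stdNormal : Measure ℝ := gaussianReal 0 1

/-- The joint law of two independent standard normals. -/
def stdNormal2 : Measure (ℝ × ℝ) := stdNormal.prod stdNormal

/-- Uniform measure on `[-1, 1]` (the prior on the state θ). -/
def uniformState : Measure ℝ := (2 : ENNReal)⁻¹ • volume.restrict (Set.Icc (-1 : ℝ) 1)

instance : IsProbabilityMeasure stdNormal := by unfold stdNormal; infer_instance
instance : IsProbabilityMeasure stdNormal2 := by unfold stdNormal2; infer_instance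


open Filter Topology in
private lemma stdPdf_pos' (z : ℝ) : 0 < stdPdf z := by
  unfold stdPdf
  positivity

private lemma stdPdf_even' (z : ℝ) : stdPdf (-z) = stdPdf z := by
  unfold stdPdf; ring_nf

private lemma stdPdf_hasDerivAt' (z : ℝ) : HasDerivAt stdPdf (-z * stdPdf z) z := by
  have h1 : HasDerivAt (fun y : ℝ => -y ^ 2 / 2) (-z) z := by
    have := ((hasDerivAt_pow 2 z).neg).div_const 2
    refine this.congr_deriv ?_
    norm_num; ring
  have h2 := (h1.exp).div_const (Real.sqrt (2 * Real.pi))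
  refine h2.congr_deriv ?_
  unfold stdPdf
  ring

private lemma stdPdf_integrable' : Integrable stdPdf := by
  have h := (integrable_exp_neg_mul_sq (by norm_num : (0:ℝ) < 1/2)).div_const
    (Real.sqrt (2 * Real.pi))
  convert h using 2 with z
  unfold stdPdf
  ring_nf

private lemma id_mul_stdPdf_integrable' : Integrable (fun z => z * stdPdf z) := by
  have h := (integrable_mul_exp_neg_mul_sq (by norm_num : (0:ℝ) < 1/2)).div_const
    (Real.sqrt (2 * Real.pi))
  convert h using 2 with z
  unfold stdPdf
  ring_nf

open Filter Topology in
private lemma stdPdf_tendsto' : Filter.Tendsto stdPdf Filter.atTop (nhds 0) := by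
  have h1 : Tendsto (fun z : ℝ => -z ^ 2 / 2) atTop atBot := by
    apply Filter.Tendsto.atBot_div_const (by norm_num : (0:ℝ) < 2)
    apply tendsto_neg_atTop_atBot.comp
    exact tendsto_pow_atTop (by norm_num)
  have h2 := (Real.tendsto_exp_atBot.comp h1).div_const (Real.sqrt (2 * Real.pi))
  exact (by simpa only [Function.comp_def, zero_div] using h2 :
    Tendsto (fun z => Real.exp (-z ^ 2 / 2) / Real.sqrt (2 * Real.pi)) atTop (𝓝 0))

private lemma stdCdf_neg_eq' (c : ℝ) : stdCdf (-c) = ∫ z in Set.Ioi c, stdPdf z := by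
  have h := integral_comp_neg_Ioi c stdPdf
  simp_rw [stdPdf_even'] at h
  rw [stdCdf, ← integral_Iic_eq_integral_Iio, ← h]

private lemma num_neg_eq' (c : ℝ) :
    ∫ z in Set.Iio (-c), z * stdPdf z = -∫ z in Set.Ioi c, z * stdPdf z := by
  have h := integral_comp_neg_Ioi c (fun x => x * stdPdf x)
  simp only [stdPdf_even', neg_mul] at h
  rw [← integral_Iic_eq_integral_Iio, ← h, integral_neg]

open Filter Topology in
private lemma integral_id_mul_pdf' (c : ℝ) (hc : 0 ≤ c) :
    ∫ z in Set.Ioi c, z * stdPdf z = stdPdf c := by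
  have hderiv : ∀ x ∈ Set.Ici c, HasDerivAt (fun z => -stdPdf z) (x * stdPdf x) x := by
    intro x _
    have := (stdPdf_hasDerivAt' x).neg
    refine this.congr_deriv ?_
    ring
  have hpos : ∀ x ∈ Set.Ioi c, 0 ≤ x * stdPdf x := fun x hx =>
    mul_nonneg (le_trans hc (le_of_lt hx)) (stdPdf_pos' x).le
  have htend : Tendsto (fun z => -stdPdf z) atTop (𝓝 0) := by
    simpa using stdPdf_tendsto'.neg
  have := integral_Ioi_of_hasDerivAt_of_nonneg' hderiv hpos htend
  simpa using this

private lemma stdCdf_neg_pos' (c : ℝ) : 0 < stdCdf (-c) := by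
  rw [stdCdf_neg_eq']
  rw [setIntegral_pos_iff_support_of_nonneg_ae]
  · have hsupp : Function.support stdPdf = Set.univ := by
      ext x; simp [Function.support, (stdPdf_pos' x).ne']
    rw [hsupp, Set.univ_inter, Real.volume_Ioi]
    exact ENNReal.zero_lt_top
  · exact Filter.Eventually.of_forall fun x => (stdPdf_pos' x).le
  · exact stdPdf_integrable'.integrableOn

private def sfn (z : ℝ) : ℝ := Real.sqrt (z ^ 2 + 8)
private def ufn (z : ℝ) : ℝ := 3 * z + sfn z

private lemma sfn_pos (z : ℝ) : 0 < sfn z := Real.sqrt_pos.mpr (by positivity)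

private lemma sfn_sq (z : ℝ) : sfn z ^ 2 = z ^ 2 + 8 := Real.sq_sqrt (by positivity)

private lemma ufn_pos {z : ℝ} (hz : 0 ≤ z) : 0 < ufn z := by
  have := sfn_pos z
  unfold ufn; linarith

private lemma sfn_hasDerivAt (z : ℝ) : HasDerivAt sfn (z / sfn z) z := by
  have h1 : HasDerivAt (fun y : ℝ => y ^ 2 + 8) (2 * z) z := by
    simpa using (hasDerivAt_pow 2 z).add_const 8
  have h2 := (Real.hasDerivAt_sqrt (by positivity : z ^ 2 + 8 ≠ 0)).comp z h1
  refine h2.congr_deriv ?_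
  unfold sfn
  field_simp

private lemma ufn_hasDerivAt (z : ℝ) : HasDerivAt ufn (3 + z / sfn z) z := by
  have h := ((hasDerivAt_id z).const_mul 3).add (sfn_hasDerivAt z)
  have hf : ((fun x : ℝ => 3 * id x) + sfn) = ufn := by
    funext x; simp [ufn, id]
  rw [hf] at h
  refine h.congr_deriv ?_
  simp

private def Ffn (z : ℝ) : ℝ := 4 * stdPdf z / ufn z

private def psi (z : ℝ) : ℝ :=
  -((4 * (-z * stdPdf z) * ufn z - 4 * stdPdf z * (3 + z / sfn z)) / ufn z ^ 2)

private lemma negF_hasDerivAt {z : ℝ} (hz : 0 ≤ z) :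
    HasDerivAt (fun y => -Ffn y) (psi z) z := by
  have h1 : HasDerivAt (fun y => 4 * stdPdf y) (4 * (-z * stdPdf z)) z :=
    (stdPdf_hasDerivAt' z).const_mul 4
  exact (h1.div (ufn_hasDerivAt z) (ufn_pos hz).ne').neg

private lemma alg_ineq (z s p : ℝ) (hz : 0 ≤ z) (hs : 0 < s) (hs2 : s ^ 2 = z ^ 2 + 8)
    (hp : 0 < p) :
    p ≤ -((4 * (-z * p) * (3 * z + s) - 4 * p * (3 + z / s)) / (3 * z + s) ^ 2) := by
  have hu : 0 < 3 * z + s := by linarith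
  have e1 : s ^ 3 = s * z ^ 2 + 8 * s := by linear_combination s * hs2
  have e2 : z * s ^ 2 = z ^ 3 + 8 * z := by linear_combination z * hs2
  have h32 : (s * (z ^ 2 + 2)) ^ 2 - (z ^ 3 + 6 * z) ^ 2 = 32 := by
    linear_combination (z ^ 2 + 2) ^ 2 * hs2
  have key : z ^ 3 + 6 * z ≤ s * (z ^ 2 + 2) := by
    nlinarith [h32, mul_pos hs (by positivity : (0:ℝ) < z ^ 2 + 2),
      mul_nonneg hz (by positivity : (0:ℝ) ≤ z ^ 2 + 6)]
  have hQ : (3 * z + s) ^ 2 * s ≤ 4 * z * (3 * z + s) * s + 12 * s + 4 * z := by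
    nlinarith [key, e1, e2]
  have hT : -((4 * (-z * p) * (3 * z + s) - 4 * p * (3 + z / s)) / (3 * z + s) ^ 2)
      = (4 * z * p * (3 * z + s) * s + 4 * p * (3 * s + z)) / ((3 * z + s) ^ 2 * s) := by
    field_simp
    ring
  rw [hT, le_div_iff₀ (by positivity)]
  nlinarith [mul_le_mul_of_nonneg_left hQ hp.le]

private lemma key_comparison {z : ℝ} (hz : 0 ≤ z) : stdPdf z ≤ psi z := by
  have h := alg_ineq z (sfn z) (stdPdf z) hz (sfn_pos z) (sfn_sq z) (stdPdf_pos' z)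
  unfold psi ufn
  exact h

private lemma psi_nonneg {z : ℝ} (hz : 0 ≤ z) : 0 ≤ psi z :=
  le_trans (stdPdf_pos' z).le (key_comparison hz)

open Filter Topology in
private lemma Ffn_tendsto : Filter.Tendsto (fun z => -Ffn z) Filter.atTop (nhds 0) := by
  have hF : Tendsto Ffn atTop (𝓝 0) := by
    apply tendsto_of_tendsto_of_tendsto_of_le_of_le' tendsto_const_nhds
      (by simpa using stdPdf_tendsto'.const_mul 2)
    · filter_upwards [eventually_ge_atTop (0:ℝ)] with z hz
      exact div_nonneg (mul_nonneg (by norm_num) (stdPdf_pos' z).le) (ufn_pos hz).le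
    · filter_upwards [eventually_ge_atTop (0:ℝ)] with z hz
      have hs : 2 ≤ sfn z := by
        rw [show (2:ℝ) = Real.sqrt 4 by
          rw [show (4:ℝ) = 2^2 by norm_num, Real.sqrt_sq (by norm_num : (0:ℝ) ≤ 2)]]
        exact Real.sqrt_le_sqrt (by nlinarith)
      have hu : 2 ≤ ufn z := by unfold ufn; linarith
      have hp := stdPdf_pos' z
      rw [Ffn, div_le_iff₀ (by linarith : (0:ℝ) < ufn z)]
      nlinarith
  simpa using hF.neg

private lemma mills_upper {c : ℝ} (hc : 0 ≤ c) :
    (∫ z in Set.Ioi c, stdPdf z) * ufn c ≤ 4 * stdPdf c := by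
  have hderiv : ∀ x ∈ Set.Ici c, HasDerivAt (fun y => -Ffn y) (psi x) x :=
    fun x hx => negF_hasDerivAt (le_trans hc hx)
  have hpos : ∀ x ∈ Set.Ioi c, 0 ≤ psi x := fun x hx => psi_nonneg (le_trans hc (le_of_lt hx))
  have hint := integral_Ioi_of_hasDerivAt_of_nonneg' hderiv hpos Ffn_tendsto
  have hIntOn : IntegrableOn psi (Set.Ioi c) :=
    integrableOn_Ioi_deriv_of_nonneg' hderiv hpos Ffn_tendsto
  have hmono : (∫ z in Set.Ioi c, stdPdf z) ≤ ∫ z in Set.Ioi c, psi z := by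
    apply setIntegral_mono_on stdPdf_integrable'.integrableOn hIntOn measurableSet_Ioi
    exact fun x hx => key_comparison (le_trans hc (le_of_lt hx))
  rw [hint] at hmono
  simp only [zero_sub, neg_neg] at hmono
  have hu := ufn_pos hc
  have hFc : Ffn c = 4 * stdPdf c / ufn c := rfl
  rw [← le_div_iff₀ hu, ← hFc]
  exact hmono

private lemma exp_bound' : Real.exp (-(3 / 2)) ≤ 1 / 4 := by
  have h1 : (4:ℝ) ≤ Real.exp (3 / 2) := by
    have he1 : (2.7182818283 : ℝ) < Real.exp 1 := Real.exp_one_gt_d9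
    have he2 : (1.5 : ℝ) ≤ Real.exp (1 / 2) := by
      have := Real.add_one_le_exp (1 / 2 : ℝ)
      linarith
    have : Real.exp (3 / 2) = Real.exp 1 * Real.exp (1 / 2) := by
      rw [← Real.exp_add]; norm_num
    nlinarith [Real.exp_pos (1/2 : ℝ)]
  rw [Real.exp_neg]
  rw [show (1:ℝ) / 4 = (4:ℝ)⁻¹ by norm_num]
  exact inv_anti₀ (by norm_num) h1

/-- **Truncated normal mean upper bound.** For every `c ≥ 0`,
`E[z | z < -c] + c ≤ -e^{-3/2} * min {1, 1/c}`, where `min {1, 1/c}` is interpreted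
as `1` when `c = 0`. -/
theorem truncated_normal_mean_upper_bound :
    ∀ c : ℝ, 0 ≤ c →
      (∫ z in Set.Iio (-c), (z + c) * stdPdf z) / stdCdf (-c) ≤
        -Real.exp (-(3 / 2)) * (if c = 0 then 1 else min 1 (1 / c)) := by
  intro c hc
  set k := Real.exp (-(3 / 2)) with hkdef
  have hk0 : 0 < k := Real.exp_pos _
  have hk4 : k ≤ 1 / 4 := exp_bound'
  set m := (if c = 0 then (1:ℝ) else min 1 (1 / c)) with hmdef
  have hD0 : 0 < stdCdf (-c) := stdCdf_neg_pos' c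
  have hnum : ∫ z in Set.Iio (-c), (z + c) * stdPdf z
      = -stdPdf c + c * stdCdf (-c) := by
    have hsplit : ∫ z in Set.Iio (-c), (z + c) * stdPdf z
        = (∫ z in Set.Iio (-c), z * stdPdf z) + ∫ z in Set.Iio (-c), c * stdPdf z := by
      rw [← integral_add (id_mul_stdPdf_integrable'.integrableOn)
        ((stdPdf_integrable'.const_mul c).integrableOn)]
      congr 1; funext z; ring
    rw [hsplit, num_neg_eq', integral_id_mul_pdf' c hc, MeasureTheory.integral_const_mul]
    rw [stdCdf]
  rw [hnum, div_le_iff₀ hD0]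
  have hs := sfn_pos c
  have hs2 := sfn_sq c
  have hp := stdPdf_pos' c
  have hu := ufn_pos hc
  have hmills := mills_upper hc
  rw [← stdCdf_neg_eq'] at hmills
  have hm_pos : 0 < m := by
    rw [hmdef]
    split_ifs with h
    · norm_num
    · have hcpos : 0 < c := lt_of_le_of_ne hc (Ne.symm h)
      simp only [lt_min_iff]
      constructor <;> positivity
  have hgeo : c + 4 * (k * m) ≤ sfn c := by
    rcases le_or_gt c 1 with h1 | h1
    · have hm1 : m = 1 := by
        rw [hmdef]
        split_ifs with h
        · rfl
        · have hcpos : 0 < c := lt_of_le_of_ne hc (Ne.symm h)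
          rw [min_eq_left]
          rw [le_div_iff₀ hcpos]; linarith
      rw [hm1, mul_one]
      nlinarith [hs2, hs.le, mul_nonneg (sub_nonneg.mpr hk4) hk0.le,
        mul_nonneg (sub_nonneg.mpr h1) hk0.le, mul_nonneg hc hk0.le]
    · have hcpos : 0 < c := lt_trans one_pos h1
      have hm1 : m = 1 / c := by
        rw [hmdef, if_neg hcpos.ne']
        exact min_eq_right ((div_le_one hcpos).mpr h1.le)
      rw [hm1]
      have hic : 0 < 1 / c := by positivity
      have hi : c * (1 / c) = 1 := by field_simp
      have h1c : 1 / c ≤ 1 := (div_le_one hcpos).mpr h1.le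
      have step : 4 * (k * (1 / c)) ≤ 1 / c := by nlinarith [hic.le]
      have step2 : c + 1 / c ≤ sfn c := by
        nlinarith [hs2, hs.le, hi, h1c, hic.le]
      linarith
  have h4 : 4 * (c + k * m) ≤ ufn c := by
    have : ufn c = 3 * c + sfn c := rfl
    rw [this]; linarith [hgeo, hc]
  have hckm : 0 ≤ c + k * m := by positivity
  have hmain : (c + k * m) * stdCdf (-c) ≤ stdPdf c := by
    nlinarith [mul_le_mul_of_nonneg_left hmills hckm,
      mul_le_mul_of_nonneg_right h4 hp.le, hu, hD0.le]
  nlinarith [hmain, hD0]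

end
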